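/- Tensorization of Wyner's common information, superadditivity direction: Let X₁, X₂, Y₁, Y₂, V be random variables on a common probability space taking values in finite sets, and suppose I(X₁,Y₁ ; X₂,Y₂) = 0 and I(X₁,X₂ ; Y₁,Y₂ | V) = 0. Then there exist random variables U₁, U₂ on the same probability space, taking values in finite sets, such that I(X₁;Y₁|U₁) = 0, I(X₂;Y₂|U₂) = 0, and I(V ; X₁,X₂,Y₁,Y₂) ≥ I(U₁ ; X₁,Y₁) + I(U₂ ; X₂,Y₂). -/

import Mathlib

open MeasureTheory

/-- Shannon entropy (in bits) of a discrete random variable `X` under measure `μ`,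
with the convention `0 · log 0 = 0`. -/
noncomputable def ent {Ω : Type*} [MeasurableSpace Ω] (μ : Measure Ω) {S : Type*}
    (X : Ω → S) : ℝ :=
  ∑' s : S, -((μ (X ⁻¹' {s})).toReal * Real.logb 2 (μ (X ⁻¹' {s})).toReal)

/-- Conditional entropy `H(X | Y)`. -/
noncomputable def condEnt {Ω : Type*} [MeasurableSpace Ω] (μ : Measure Ω) {S T : Type*}
    (X : Ω → S) (Y : Ω → T) : ℝ :=
  ent μ (fun ω => (X ω, Y ω)) - ent μ Y

/-- Mutual information `I(X ; Y)`. -/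
noncomputable def mi {Ω : Type*} [MeasurableSpace Ω] (μ : Measure Ω) {S T : Type*}
    (X : Ω → S) (Y : Ω → T) : ℝ :=
  ent μ X + ent μ Y - ent μ (fun ω => (X ω, Y ω))

/-- Conditional mutual information `I(X ; Y | Z)`. -/
noncomputable def cmi {Ω : Type*} [MeasurableSpace Ω] (μ : Measure Ω) {S T V : Type*}
    (X : Ω → S) (Y : Ω → T) (Z : Ω → V) : ℝ :=
  ent μ (fun ω => (X ω, Z ω)) + ent μ (fun ω => (Y ω, Z ω))
    - ent μ (fun ω => (X ω, Y ω, Z ω)) - ent μ Z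

/-- A function into a discrete value space is a random variable iff every
preimage of a point is measurable. -/
def DMeasurable {Ω : Type*} [MeasurableSpace Ω] {S : Type*} (X : Ω → S) : Prop :=
  ∀ s : S, MeasurableSet (X ⁻¹' {s})

/-- Two discrete random variables (possibly on different probability spaces)
are identically distributed. -/
def IdentDist {Ω Ω' : Type*} [MeasurableSpace Ω] [MeasurableSpace Ω'] (μ : Measure Ω)
    (ν : Measure Ω') {S : Type*} (X : Ω → S) (Y : Ω' → S) : Prop :=
  ∀ s : S, μ (X ⁻¹' {s}) = ν (Y ⁻¹' {s})

section Aux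

variable {Ω : Type*} [MeasurableSpace Ω]


lemma ent_fintype (μ : Measure Ω) {S : Type*} [Fintype S] (X : Ω → S) :
    ent μ X = ∑ s : S, -((μ (X ⁻¹' {s})).toReal * Real.logb 2 (μ (X ⁻¹' {s})).toReal) :=
  tsum_fintype _

lemma ent_comp_inj (μ : Measure Ω) {S T : Type*} (f : S → T)
    (hf : Function.Injective f) (X : Ω → S) :
    ent μ (fun ω => f (X ω)) = ent μ X := by
  have hpre : ∀ s : S, (fun ω => f (X ω)) ⁻¹' {f s} = X ⁻¹' {s} := by
    intro s; ext ω; simp [hf.eq_iff]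
  have hsupp : Function.support (fun t =>
      -((μ ((fun ω => f (X ω)) ⁻¹' {t})).toReal *
        Real.logb 2 (μ ((fun ω => f (X ω)) ⁻¹' {t})).toReal)) ⊆ Set.range f := by
    intro t ht
    by_contra hr
    apply ht
    have : (fun ω => f (X ω)) ⁻¹' {t} = ∅ := by
      ext ω; simp only [Set.mem_preimage, Set.mem_singleton_iff, Set.mem_empty_iff_false,
        iff_false]
      intro h; exact hr ⟨X ω, h⟩
    simp [this]
  calc ent μ (fun ω => f (X ω))
      = ∑' s : S, -((μ ((fun ω => f (X ω)) ⁻¹' {f s})).toReal *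
          Real.logb 2 (μ ((fun ω => f (X ω)) ⁻¹' {f s})).toReal) := (hf.tsum_eq hsupp).symm
    _ = ent μ X := by unfold ent; exact tsum_congr fun s => by rw [hpre s]

lemma ent_congr (μ : Measure Ω) {S T : Type*} {X : Ω → S} {Y : Ω → T}
    (f : T → S) (g : S → T) (hfg : ∀ p, g (f p) = p) (h : ∀ ω, X ω = f (Y ω)) :
    ent μ X = ent μ Y := by
  have hX : X = fun ω => f (Y ω) := funext h
  rw [hX]
  exact ent_comp_inj μ f (Function.LeftInverse.injective hfg) Y

lemma DMeasurable.prodMk {S T : Type*} {X : Ω → S} {Y : Ω → T}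
    (hX : DMeasurable X) (hY : DMeasurable Y) : DMeasurable (fun ω => (X ω, Y ω)) := by
  intro p
  have : (fun ω => (X ω, Y ω)) ⁻¹' {p} = X ⁻¹' {p.1} ∩ Y ⁻¹' {p.2} := by
    ext ω; simp [Prod.ext_iff]
  rw [this]; exact (hX _).inter (hY _)

lemma measure_toReal_eq_sum_fiber (μ : Measure Ω) [IsProbabilityMeasure μ] {ι : Type*}
    [Fintype ι] {A : Set Ω} {B : ι → Set Ω} (hB : ∀ i, MeasurableSet (B i))
    (hdisj : Pairwise (Function.onFun Disjoint B)) (hU : A = ⋃ i, B i) :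
    (μ A).toReal = ∑ i, (μ (B i)).toReal := by
  rw [hU, measure_iUnion hdisj hB, tsum_fintype,
    ENNReal.toReal_sum (fun i _ => measure_ne_top μ _)]

lemma pt_bound {p q2 q3 q4 : ℝ} (hp : 0 ≤ p) (h2 : p ≤ q2) (h3 : p ≤ q3)
    (h24 : q2 ≤ q4) (h3nn : 0 ≤ q3) :
    (p - q2 * q3 / q4) * (Real.log 2)⁻¹
      ≤ p * Real.logb 2 p + p * Real.logb 2 q4 - p * Real.logb 2 q2 - p * Real.logb 2 q3 := by
  have hlog2 : 0 < Real.log 2 := Real.log_pos (by norm_num)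
  rcases eq_or_lt_of_le hp with h0 | hp0
  · have hq4 : 0 ≤ q4 := le_trans (hp.trans h2) h24
    have hQ : 0 ≤ q2 * q3 / q4 := div_nonneg (mul_nonneg (hp.trans h2) h3nn) hq4
    rw [← h0]
    have : (0 - q2 * q3 / q4) * (Real.log 2)⁻¹ ≤ 0 := by
      apply mul_nonpos_of_nonpos_of_nonneg
      · linarith
      · positivity
    simpa using this
  · have hq2 : 0 < q2 := lt_of_lt_of_le hp0 h2
    have hq3 : 0 < q3 := lt_of_lt_of_le hp0 h3
    have hq4 : 0 < q4 := lt_of_lt_of_le hq2 h24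
    have hlog : Real.log (q2 * q3 / (p * q4)) ≤ q2 * q3 / (p * q4) - 1 :=
      Real.log_le_sub_one_of_pos (by positivity)
    have hexp : Real.log (q2 * q3 / (p * q4))
        = Real.log q2 + Real.log q3 - Real.log p - Real.log q4 := by
      rw [Real.log_div (by positivity) (by positivity), Real.log_mul hq2.ne' hq3.ne',
        Real.log_mul hp0.ne' hq4.ne']
      ring
    have h' : Real.log q2 + Real.log q3 - Real.log p - Real.log q4
        ≤ q2 * q3 / (p * q4) - 1 := by rw [← hexp]; exact hlog
    have h'' := mul_le_mul_of_nonneg_left h' hp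
    have hid : p * (q2 * q3 / (p * q4)) = q2 * q3 / q4 := by
      field_simp
    have key : p - q2 * q3 / q4
        ≤ p * (Real.log p + Real.log q4 - Real.log q2 - Real.log q3) := by
      nlinarith [h'', hid]
    simp only [Real.logb]
    calc (p - q2 * q3 / q4) * (Real.log 2)⁻¹
        ≤ (p * (Real.log p + Real.log q4 - Real.log q2 - Real.log q3)) * (Real.log 2)⁻¹ :=
          mul_le_mul_of_nonneg_right key (by positivity)
      _ = p * (Real.log p / Real.log 2) + p * (Real.log q4 / Real.log 2)
          - p * (Real.log q2 / Real.log 2) - p * (Real.log q3 / Real.log 2) := by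
          field_simp

lemma neg_sum_mul {ι : Type*} [Fintype ι] (f : ι → ℝ) (c : ℝ) :
    -((∑ i, f i) * c) = ∑ i, -(f i * c) := by
  rw [Finset.sum_mul]
  exact (Finset.sum_neg_distrib _).symm

lemma cmi_nonneg {S T U : Type*} (μ : Measure Ω) [IsProbabilityMeasure μ]
    [Fintype S] [Fintype T] [Fintype U]
    {X : Ω → S} {Y : Ω → T} {Z : Ω → U}
    (hX : DMeasurable X) (hY : DMeasurable Y) (hZ : DMeasurable Z) :
    0 ≤ cmi μ X Y Z := by
  classical
  set P : S → T → U → ℝ := fun s t u => (μ (X ⁻¹' {s} ∩ Y ⁻¹' {t} ∩ Z ⁻¹' {u})).toReal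
    with hPdef
  have hPnn : ∀ s t u, 0 ≤ P s t u := fun _ _ _ => ENNReal.toReal_nonneg
  have hBm : ∀ s t u, MeasurableSet (X ⁻¹' {s} ∩ Y ⁻¹' {t} ∩ Z ⁻¹' {u}) :=
    fun s t u => ((hX s).inter (hY t)).inter (hZ u)
  set P2 : S → U → ℝ := fun s u => ∑ t, P s t u with hP2def
  set P3 : T → U → ℝ := fun t u => ∑ s, P s t u with hP3def
  set P4 : U → ℝ := fun u => ∑ s, ∑ t, P s t u with hP4def
  have hP2nn : ∀ s u, 0 ≤ P2 s u := fun s u => Finset.sum_nonneg fun t _ => hPnn s t u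
  have hP3nn : ∀ t u, 0 ≤ P3 t u := fun t u => Finset.sum_nonneg fun s _ => hPnn s t u
  -- marginal identities
  have hXZ : ∀ s u, (μ ((fun ω => (X ω, Z ω)) ⁻¹' {(s, u)})).toReal = P2 s u := by
    intro s u
    refine measure_toReal_eq_sum_fiber μ (fun t => hBm s t u) ?_ ?_
    · intro t t' htt'
      simp only [Function.onFun]
      apply Set.disjoint_left.mpr
      rintro ω hω hω'
      simp only [Set.mem_inter_iff, Set.mem_preimage, Set.mem_singleton_iff] at hω hω'
      exact htt' (hω.1.2.symm.trans hω'.1.2)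
    · ext ω
      simp only [Set.mem_preimage, Set.mem_singleton_iff, Prod.mk.injEq, Set.mem_iUnion,
        Set.mem_inter_iff]
      constructor
      · rintro ⟨hx, hz⟩; exact ⟨Y ω, ⟨⟨hx, rfl⟩, hz⟩⟩
      · rintro ⟨t, ⟨⟨hx, _⟩, hz⟩⟩; exact ⟨hx, hz⟩
  have hYZ : ∀ t u, (μ ((fun ω => (Y ω, Z ω)) ⁻¹' {(t, u)})).toReal = P3 t u := by
    intro t u
    refine measure_toReal_eq_sum_fiber μ (fun s => hBm s t u) ?_ ?_
    · intro s s' hss'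
      simp only [Function.onFun]
      apply Set.disjoint_left.mpr
      rintro ω hω hω'
      simp only [Set.mem_inter_iff, Set.mem_preimage, Set.mem_singleton_iff] at hω hω'
      exact hss' (hω.1.1.symm.trans hω'.1.1)
    · ext ω
      simp only [Set.mem_preimage, Set.mem_singleton_iff, Prod.mk.injEq, Set.mem_iUnion,
        Set.mem_inter_iff]
      constructor
      · rintro ⟨hy, hz⟩; exact ⟨X ω, ⟨⟨rfl, hy⟩, hz⟩⟩
      · rintro ⟨s, ⟨⟨_, hy⟩, hz⟩⟩; exact ⟨hy, hz⟩
  have hZu : ∀ u, (μ (Z ⁻¹' {u})).toReal = P4 u := by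
    intro u
    have := measure_toReal_eq_sum_fiber (ι := S × T) μ
      (B := fun p => X ⁻¹' {p.1} ∩ Y ⁻¹' {p.2} ∩ Z ⁻¹' {u}) (A := Z ⁻¹' {u})
      (fun p => hBm p.1 p.2 u) ?_ ?_
    · rw [this, Fintype.sum_prod_type]
    · rintro ⟨s, t⟩ ⟨s', t'⟩ hne
      simp only [Function.onFun]
      apply Set.disjoint_left.mpr
      rintro ω hω hω'
      simp only [Set.mem_inter_iff, Set.mem_preimage, Set.mem_singleton_iff] at hω hω'
      exact hne (by
        simp only [Prod.mk.injEq]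
        exact ⟨hω.1.1.symm.trans hω'.1.1, hω.1.2.symm.trans hω'.1.2⟩)
    · ext ω
      simp only [Set.mem_preimage, Set.mem_singleton_iff, Set.mem_iUnion, Set.mem_inter_iff]
      constructor
      · intro hz; exact ⟨(X ω, Y ω), ⟨⟨rfl, rfl⟩, hz⟩⟩
      · rintro ⟨p, ⟨_, hz⟩⟩; exact hz
  have hXYZ : ∀ s t u, (μ ((fun ω => (X ω, Y ω, Z ω)) ⁻¹' {(s, t, u)})).toReal = P s t u := by
    intro s t u
    have hset : (fun ω => (X ω, Y ω, Z ω)) ⁻¹' {(s, t, u)}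
        = X ⁻¹' {s} ∩ Y ⁻¹' {t} ∩ Z ⁻¹' {u} := by
      ext ω; simp [Prod.ext_iff, and_assoc]
    rw [hset]
  have htot : ∑ u, P4 u = 1 := by
    have := measure_toReal_eq_sum_fiber (ι := U) μ (B := fun u => Z ⁻¹' {u})
      (A := Set.univ) (fun u => hZ u) ?_ ?_
    · have h1 : (μ (Set.univ : Set Ω)).toReal = 1 := by simp
      rw [h1] at this
      calc ∑ u, P4 u = ∑ u, (μ (Z ⁻¹' {u})).toReal :=
            Finset.sum_congr rfl fun u _ => (hZu u).symm
        _ = 1 := this.symm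
    · intro u u' hne
      simp only [Function.onFun]
      apply Set.disjoint_left.mpr
      rintro ω hω hω'
      simp only [Set.mem_preimage, Set.mem_singleton_iff] at hω hω'
      exact hne (hω.symm.trans hω')
    · ext ω
      simp
  -- entropies as triple sums
  have eXZ : ent μ (fun ω => (X ω, Z ω))
      = ∑ s, ∑ t, ∑ u, -(P s t u * Real.logb 2 (P2 s u)) := by
    rw [ent_fintype, Fintype.sum_prod_type]
    refine Finset.sum_congr rfl fun s _ => ?_
    rw [Finset.sum_comm]
    refine Finset.sum_congr rfl fun u _ => ?_
    rw [hXZ s u]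
    exact neg_sum_mul (fun t => P s t u) (Real.logb 2 (P2 s u))
  have eYZ : ent μ (fun ω => (Y ω, Z ω))
      = ∑ s, ∑ t, ∑ u, -(P s t u * Real.logb 2 (P3 t u)) := by
    rw [ent_fintype, Fintype.sum_prod_type]
    have : ∀ t u, -((μ ((fun ω => (Y ω, Z ω)) ⁻¹' {(t, u)})).toReal *
        Real.logb 2 (μ ((fun ω => (Y ω, Z ω)) ⁻¹' {(t, u)})).toReal)
        = ∑ s, -(P s t u * Real.logb 2 (P3 t u)) := by
      intro t u
      rw [hYZ t u]
      exact neg_sum_mul (fun s => P s t u) (Real.logb 2 (P3 t u))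
    calc ∑ t, ∑ u, -((μ ((fun ω => (Y ω, Z ω)) ⁻¹' {(t, u)})).toReal *
          Real.logb 2 (μ ((fun ω => (Y ω, Z ω)) ⁻¹' {(t, u)})).toReal)
        = ∑ t, ∑ u, ∑ s, -(P s t u * Real.logb 2 (P3 t u)) := by
          exact Finset.sum_congr rfl fun t _ => Finset.sum_congr rfl fun u _ => this t u
      _ = ∑ t, ∑ s, ∑ u, -(P s t u * Real.logb 2 (P3 t u)) :=
          Finset.sum_congr rfl fun t _ => Finset.sum_comm
      _ = ∑ s, ∑ t, ∑ u, -(P s t u * Real.logb 2 (P3 t u)) := Finset.sum_comm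
  have eZ : ent μ Z = ∑ s, ∑ t, ∑ u, -(P s t u * Real.logb 2 (P4 u)) := by
    rw [ent_fintype]
    have : ∀ u, -((μ (Z ⁻¹' {u})).toReal * Real.logb 2 (μ (Z ⁻¹' {u})).toReal)
        = ∑ s, ∑ t, -(P s t u * Real.logb 2 (P4 u)) := by
      intro u
      rw [hZu u]
      calc -(P4 u * Real.logb 2 (P4 u))
          = ∑ s, -((∑ t, P s t u) * Real.logb 2 (P4 u)) :=
            neg_sum_mul (fun s => ∑ t, P s t u) (Real.logb 2 (P4 u))
        _ = ∑ s, ∑ t, -(P s t u * Real.logb 2 (P4 u)) :=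
            Finset.sum_congr rfl fun s _ =>
              neg_sum_mul (fun t => P s t u) (Real.logb 2 (P4 u))
    calc ∑ u, -((μ (Z ⁻¹' {u})).toReal * Real.logb 2 (μ (Z ⁻¹' {u})).toReal)
        = ∑ u, ∑ s, ∑ t, -(P s t u * Real.logb 2 (P4 u)) :=
          Finset.sum_congr rfl fun u _ => this u
      _ = ∑ s, ∑ u, ∑ t, -(P s t u * Real.logb 2 (P4 u)) := Finset.sum_comm
      _ = ∑ s, ∑ t, ∑ u, -(P s t u * Real.logb 2 (P4 u)) :=
          Finset.sum_congr rfl fun s _ => Finset.sum_comm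
  have eXYZ : ent μ (fun ω => (X ω, Y ω, Z ω))
      = ∑ s, ∑ t, ∑ u, -(P s t u * Real.logb 2 (P s t u)) := by
    rw [ent_fintype, Fintype.sum_prod_type]
    refine Finset.sum_congr rfl fun s _ => ?_
    rw [Fintype.sum_prod_type]
    refine Finset.sum_congr rfl fun t _ => Finset.sum_congr rfl fun u _ => ?_
    rw [hXYZ s t u]
  have hkey : cmi μ X Y Z = ∑ s, ∑ t, ∑ u,
      (P s t u * Real.logb 2 (P s t u) + P s t u * Real.logb 2 (P4 u)
        - P s t u * Real.logb 2 (P2 s u) - P s t u * Real.logb 2 (P3 t u)) := by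
    rw [cmi, eXZ, eYZ, eZ, eXYZ]
    simp only [Finset.sum_add_distrib, Finset.sum_sub_distrib, Finset.sum_neg_distrib]
    ring
  -- lower bound
  have hQnn : ∀ s t u, 0 ≤ P2 s u * P3 t u / P4 u := by
    intro s t u
    have : 0 ≤ P4 u := Finset.sum_nonneg fun s _ => hP2nn s u
    exact div_nonneg (mul_nonneg (hP2nn s u) (hP3nn t u)) this
  have hbound : ∀ s t u, (P s t u - P2 s u * P3 t u / P4 u) * (Real.log 2)⁻¹
      ≤ P s t u * Real.logb 2 (P s t u) + P s t u * Real.logb 2 (P4 u)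
        - P s t u * Real.logb 2 (P2 s u) - P s t u * Real.logb 2 (P3 t u) := by
    intro s t u
    refine pt_bound (hPnn s t u) ?_ ?_ ?_ (hP3nn t u)
    · exact Finset.single_le_sum (fun t _ => hPnn s t u) (Finset.mem_univ t)
    · exact Finset.single_le_sum (fun s _ => hPnn s t u) (Finset.mem_univ s)
    · exact Finset.single_le_sum (fun s _ => hP2nn s u) (Finset.mem_univ s)
  have hsumP : ∑ s, ∑ t, ∑ u, P s t u = 1 := by
    rw [← htot]
    calc ∑ s, ∑ t, ∑ u, P s t u = ∑ s, ∑ u, ∑ t, P s t u :=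
          Finset.sum_congr rfl fun s _ => Finset.sum_comm
      _ = ∑ u, ∑ s, ∑ t, P s t u := Finset.sum_comm
  have hsumQ : ∑ s, ∑ t, ∑ u, P2 s u * P3 t u / P4 u ≤ 1 := by
    have h34 : ∀ u, ∑ t, P3 t u = P4 u := by
      intro u
      rw [hP4def]
      exact Finset.sum_comm
    calc ∑ s, ∑ t, ∑ u, P2 s u * P3 t u / P4 u
        = ∑ u, ∑ s, ∑ t, P2 s u * P3 t u / P4 u := by
          rw [show (∑ s, ∑ t, ∑ u, P2 s u * P3 t u / P4 u)
              = ∑ s, ∑ u, ∑ t, P2 s u * P3 t u / P4 u from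
            Finset.sum_congr rfl fun s _ => Finset.sum_comm]
          exact Finset.sum_comm
      _ = ∑ u, P4 u * P4 u / P4 u := by
          refine Finset.sum_congr rfl fun u _ => ?_
          have inner : ∀ s, ∑ t, P2 s u * P3 t u / P4 u = P2 s u * P4 u / P4 u := by
            intro s
            rw [← Finset.sum_div, ← Finset.mul_sum, h34 u]
          rw [Finset.sum_congr rfl fun s _ => inner s, ← Finset.sum_div, ← Finset.sum_mul]
      _ ≤ ∑ u, P4 u := by
          refine Finset.sum_le_sum fun u _ => ?_
          rcases eq_or_ne (P4 u) 0 with h | h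
          · simp [h]
          · rw [mul_div_assoc, div_self h, mul_one]
      _ = 1 := htot
  have hfinal : (0:ℝ) ≤ ∑ s, ∑ t, ∑ u,
      (P s t u * Real.logb 2 (P s t u) + P s t u * Real.logb 2 (P4 u)
        - P s t u * Real.logb 2 (P2 s u) - P s t u * Real.logb 2 (P3 t u)) := by
    have step1 : ∑ s, ∑ t, ∑ u, (P s t u - P2 s u * P3 t u / P4 u) * (Real.log 2)⁻¹
        ≤ ∑ s, ∑ t, ∑ u,
          (P s t u * Real.logb 2 (P s t u) + P s t u * Real.logb 2 (P4 u)
            - P s t u * Real.logb 2 (P2 s u) - P s t u * Real.logb 2 (P3 t u)) := by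
      refine Finset.sum_le_sum fun s _ => Finset.sum_le_sum fun t _ =>
        Finset.sum_le_sum fun u _ => hbound s t u
    have step2 : ∑ s, ∑ t, ∑ u, (P s t u - P2 s u * P3 t u / P4 u) * (Real.log 2)⁻¹
        = ((∑ s, ∑ t, ∑ u, P s t u) - ∑ s, ∑ t, ∑ u, P2 s u * P3 t u / P4 u)
          * (Real.log 2)⁻¹ := by
      simp only [sub_mul, Finset.sum_sub_distrib, Finset.sum_mul]
    have step3 : (0:ℝ) ≤ ((∑ s, ∑ t, ∑ u, P s t u)
        - ∑ s, ∑ t, ∑ u, P2 s u * P3 t u / P4 u) * (Real.log 2)⁻¹ := by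
      have h1 : (0:ℝ) ≤ (∑ s, ∑ t, ∑ u, P s t u)
          - ∑ s, ∑ t, ∑ u, P2 s u * P3 t u / P4 u := by
        rw [hsumP]; linarith
      have h2 : (0:ℝ) ≤ (Real.log 2)⁻¹ := by positivity
      exact mul_nonneg h1 h2
    linarith
  rw [hkey]
  exact hfinal

end Aux

/-- Tensorization of Wyner's common information, superadditivity direction. -/
theorem wyner_tensorization_superadditive {Ω 𝒳₁ 𝒳₂ 𝒴₁ 𝒴₂ 𝒱 : Type} [MeasurableSpace Ω]
    (μ : Measure Ω) [IsProbabilityMeasure μ]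
    [Fintype 𝒳₁] [Fintype 𝒳₂] [Fintype 𝒴₁] [Fintype 𝒴₂] [Fintype 𝒱]
    (X₁ : Ω → 𝒳₁) (X₂ : Ω → 𝒳₂) (Y₁ : Ω → 𝒴₁) (Y₂ : Ω → 𝒴₂) (V : Ω → 𝒱)
    (hX₁ : DMeasurable X₁) (hX₂ : DMeasurable X₂) (hY₁ : DMeasurable Y₁)
    (hY₂ : DMeasurable Y₂) (hV : DMeasurable V)
    (hind : mi μ (fun ω => (X₁ ω, Y₁ ω)) (fun ω => (X₂ ω, Y₂ ω)) = 0)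
    (hci : cmi μ (fun ω => (X₁ ω, X₂ ω)) (fun ω => (Y₁ ω, Y₂ ω)) V = 0) :
    ∃ (𝒰₁ 𝒰₂ : Type) (_ : Fintype 𝒰₁) (_ : Fintype 𝒰₂) (U₁ : Ω → 𝒰₁) (U₂ : Ω → 𝒰₂),
      DMeasurable U₁ ∧ DMeasurable U₂ ∧
      cmi μ X₁ Y₁ U₁ = 0 ∧ cmi μ X₂ Y₂ U₂ = 0 ∧
      mi μ V (fun ω => (X₁ ω, X₂ ω, Y₁ ω, Y₂ ω))
        ≥ mi μ U₁ (fun ω => (X₁ ω, Y₁ ω)) + mi μ U₂ (fun ω => (X₂ ω, Y₂ ω)) := by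
  classical
  -- relabeling identities for entropies (canonical order: X₁, X₂, Y₁, Y₂, V last)
  have ra : ent μ (fun ω => ((X₁ ω, X₂ ω), V ω)) = ent μ (fun ω => (X₁ ω, X₂ ω, V ω)) :=
    ent_congr μ (fun p => ((p.1, p.2.1), p.2.2)) (fun p => (p.1.1, p.1.2, p.2))
      (fun p => rfl) (fun ω => rfl)
  have rb : ent μ (fun ω => ((Y₁ ω, Y₂ ω), V ω)) = ent μ (fun ω => (Y₁ ω, Y₂ ω, V ω)) :=
    ent_congr μ (fun p => ((p.1, p.2.1), p.2.2)) (fun p => (p.1.1, p.1.2, p.2))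
      (fun p => rfl) (fun ω => rfl)
  have rc : ent μ (fun ω => ((X₁ ω, X₂ ω), (Y₁ ω, Y₂ ω), V ω))
      = ent μ (fun ω => (X₁ ω, X₂ ω, Y₁ ω, Y₂ ω, V ω)) :=
    ent_congr μ (fun p => ((p.1, p.2.1), (p.2.2.1, p.2.2.2.1), p.2.2.2.2))
      (fun p => (p.1.1, p.1.2, p.2.1.1, p.2.1.2, p.2.2)) (fun p => rfl) (fun ω => rfl)
  have rd : ent μ (fun ω => (Y₂ ω, Y₁ ω, V ω)) = ent μ (fun ω => (Y₁ ω, Y₂ ω, V ω)) :=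
    ent_congr μ (fun p => (p.2.1, p.1, p.2.2)) (fun p => (p.2.1, p.1, p.2.2))
      (fun p => rfl) (fun ω => rfl)
  have re : ent μ (fun ω => (X₁ ω, Y₂ ω, Y₁ ω, V ω))
      = ent μ (fun ω => (X₁ ω, Y₁ ω, Y₂ ω, V ω)) :=
    ent_congr μ (fun p => (p.1, p.2.2.1, p.2.1, p.2.2.2)) (fun p => (p.1, p.2.2.1, p.2.1, p.2.2.2))
      (fun p => rfl) (fun ω => rfl)
  have rf : ent μ (fun ω => (X₂ ω, X₁ ω, V ω)) = ent μ (fun ω => (X₁ ω, X₂ ω, V ω)) :=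
    ent_congr μ (fun p => (p.2.1, p.1, p.2.2)) (fun p => (p.2.1, p.1, p.2.2))
      (fun p => rfl) (fun ω => rfl)
  have rg : ent μ (fun ω => ((Y₁ ω, Y₂ ω), X₁ ω, V ω))
      = ent μ (fun ω => (X₁ ω, Y₁ ω, Y₂ ω, V ω)) :=
    ent_congr μ (fun p => ((p.2.1, p.2.2.1), p.1, p.2.2.2))
      (fun p => (p.2.1, p.1.1, p.1.2, p.2.2)) (fun p => rfl) (fun ω => rfl)
  have rh : ent μ (fun ω => (X₂ ω, (Y₁ ω, Y₂ ω), X₁ ω, V ω))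
      = ent μ (fun ω => (X₁ ω, X₂ ω, Y₁ ω, Y₂ ω, V ω)) :=
    ent_congr μ (fun p => (p.2.1, (p.2.2.1, p.2.2.2.1), p.1, p.2.2.2.2))
      (fun p => (p.2.2.1, p.1, p.2.1.1, p.2.1.2, p.2.2.2)) (fun p => rfl) (fun ω => rfl)
  have ri : ent μ (fun ω => (X₁ ω, (Y₁ ω, Y₂ ω), V ω))
      = ent μ (fun ω => (X₁ ω, Y₁ ω, Y₂ ω, V ω)) :=
    ent_congr μ (fun p => (p.1, (p.2.1, p.2.2.1), p.2.2.2))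
      (fun p => (p.1, p.2.1.1, p.2.1.2, p.2.2)) (fun p => rfl) (fun ω => rfl)
  have rj : ent μ (fun ω => (Y₁ ω, X₁ ω, V ω)) = ent μ (fun ω => (X₁ ω, Y₁ ω, V ω)) :=
    ent_congr μ (fun p => (p.2.1, p.1, p.2.2)) (fun p => (p.2.1, p.1, p.2.2))
      (fun p => rfl) (fun ω => rfl)
  have rk : ent μ (fun ω => (X₂ ω, Y₁ ω, X₁ ω, V ω))
      = ent μ (fun ω => (X₁ ω, X₂ ω, Y₁ ω, V ω)) :=
    ent_congr μ (fun p => (p.2.1, p.2.2.1, p.1, p.2.2.2))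
      (fun p => (p.2.2.1, p.1, p.2.1, p.2.2.2)) (fun p => rfl) (fun ω => rfl)
  have rl : ent μ (fun ω => (X₂ ω, V ω, X₁ ω, Y₁ ω))
      = ent μ (fun ω => (X₁ ω, X₂ ω, Y₁ ω, V ω)) :=
    ent_congr μ (fun p => (p.2.1, p.2.2.2, p.1, p.2.2.1))
      (fun p => (p.2.2.1, p.1, p.2.2.2, p.2.1)) (fun p => rfl) (fun ω => rfl)
  have rm : ent μ (fun ω => (Y₂ ω, V ω, X₁ ω, Y₁ ω))
      = ent μ (fun ω => (X₁ ω, Y₁ ω, Y₂ ω, V ω)) :=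
    ent_congr μ (fun p => (p.2.2.1, p.2.2.2, p.1, p.2.1))
      (fun p => (p.2.2.1, p.2.2.2, p.1, p.2.1)) (fun p => rfl) (fun ω => rfl)
  have rn : ent μ (fun ω => (X₂ ω, Y₂ ω, V ω, X₁ ω, Y₁ ω))
      = ent μ (fun ω => (X₁ ω, X₂ ω, Y₁ ω, Y₂ ω, V ω)) :=
    ent_congr μ (fun p => (p.2.1, p.2.2.2.1, p.2.2.2.2, p.1, p.2.2.1))
      (fun p => (p.2.2.2.1, p.1, p.2.2.2.2, p.2.1, p.2.2.1)) (fun p => rfl) (fun ω => rfl)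
  have ro : ent μ (fun ω => (V ω, X₁ ω, Y₁ ω)) = ent μ (fun ω => (X₁ ω, Y₁ ω, V ω)) :=
    ent_congr μ (fun p => (p.2.2, p.1, p.2.1)) (fun p => (p.2.1, p.2.2, p.1))
      (fun p => rfl) (fun ω => rfl)
  have s1 : ent μ (fun ω => (X₁ ω, X₂ ω, Y₁ ω, Y₂ ω))
      = ent μ (fun ω => (X₁ ω, Y₁ ω, X₂ ω, Y₂ ω)) :=
    ent_congr μ (fun p => (p.1, p.2.2.1, p.2.1, p.2.2.2))
      (fun p => (p.1, p.2.2.1, p.2.1, p.2.2.2)) (fun p => rfl) (fun ω => rfl)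
  have s2 : ent μ (fun ω => (V ω, X₁ ω, X₂ ω, Y₁ ω, Y₂ ω))
      = ent μ (fun ω => (V ω, X₁ ω, Y₁ ω, X₂ ω, Y₂ ω)) :=
    ent_congr μ (fun p => (p.1, p.2.1, p.2.2.2.1, p.2.2.1, p.2.2.2.2))
      (fun p => (p.1, p.2.1, p.2.2.2.1, p.2.2.1, p.2.2.2.2)) (fun p => rfl) (fun ω => rfl)
  have s3 : ent μ (fun ω => ((V ω, X₁ ω, Y₁ ω), X₂ ω, Y₂ ω))
      = ent μ (fun ω => (V ω, X₁ ω, Y₁ ω, X₂ ω, Y₂ ω)) :=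
    ent_congr μ (fun p => ((p.1, p.2.1, p.2.2.1), p.2.2.2.1, p.2.2.2.2))
      (fun p => (p.1.1, p.1.2.1, p.1.2.2, p.2.1, p.2.2)) (fun p => rfl) (fun ω => rfl)
  have s4 : ent μ (fun ω => ((X₁ ω, Y₁ ω), X₂ ω, Y₂ ω))
      = ent μ (fun ω => (X₁ ω, Y₁ ω, X₂ ω, Y₂ ω)) :=
    ent_congr μ (fun p => ((p.1, p.2.1), p.2.2.1, p.2.2.2))
      (fun p => (p.1.1, p.1.2, p.2.1, p.2.2)) (fun p => rfl) (fun ω => rfl)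
  -- expansions (definitional)
  have Ehci : cmi μ (fun ω => (X₁ ω, X₂ ω)) (fun ω => (Y₁ ω, Y₂ ω)) V
      = ent μ (fun ω => ((X₁ ω, X₂ ω), V ω)) + ent μ (fun ω => ((Y₁ ω, Y₂ ω), V ω))
        - ent μ (fun ω => ((X₁ ω, X₂ ω), (Y₁ ω, Y₂ ω), V ω)) - ent μ V := rfl
  have E1 : cmi μ X₁ Y₁ V
      = ent μ (fun ω => (X₁ ω, V ω)) + ent μ (fun ω => (Y₁ ω, V ω))
        - ent μ (fun ω => (X₁ ω, Y₁ ω, V ω)) - ent μ V := rfl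
  have E2 : cmi μ X₁ Y₂ (fun ω => (Y₁ ω, V ω))
      = ent μ (fun ω => (X₁ ω, Y₁ ω, V ω)) + ent μ (fun ω => (Y₂ ω, Y₁ ω, V ω))
        - ent μ (fun ω => (X₁ ω, Y₂ ω, Y₁ ω, V ω)) - ent μ (fun ω => (Y₁ ω, V ω)) := rfl
  have E3 : cmi μ X₂ (fun ω => (Y₁ ω, Y₂ ω)) (fun ω => (X₁ ω, V ω))
      = ent μ (fun ω => (X₂ ω, X₁ ω, V ω)) + ent μ (fun ω => ((Y₁ ω, Y₂ ω), X₁ ω, V ω))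
        - ent μ (fun ω => (X₂ ω, (Y₁ ω, Y₂ ω), X₁ ω, V ω))
        - ent μ (fun ω => (X₁ ω, V ω)) := rfl
  have E4 : cmi μ X₁ (fun ω => (Y₁ ω, Y₂ ω)) V
      = ent μ (fun ω => (X₁ ω, V ω)) + ent μ (fun ω => ((Y₁ ω, Y₂ ω), V ω))
        - ent μ (fun ω => (X₁ ω, (Y₁ ω, Y₂ ω), V ω)) - ent μ V := rfl
  have E5 : cmi μ X₂ Y₁ (fun ω => (X₁ ω, V ω))
      = ent μ (fun ω => (X₂ ω, X₁ ω, V ω)) + ent μ (fun ω => (Y₁ ω, X₁ ω, V ω))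
        - ent μ (fun ω => (X₂ ω, Y₁ ω, X₁ ω, V ω)) - ent μ (fun ω => (X₁ ω, V ω)) := rfl
  have E6 : cmi μ X₂ Y₂ (fun ω => (V ω, X₁ ω, Y₁ ω))
      = ent μ (fun ω => (X₂ ω, V ω, X₁ ω, Y₁ ω)) + ent μ (fun ω => (Y₂ ω, V ω, X₁ ω, Y₁ ω))
        - ent μ (fun ω => (X₂ ω, Y₂ ω, V ω, X₁ ω, Y₁ ω))
        - ent μ (fun ω => (V ω, X₁ ω, Y₁ ω)) := rfl
  have Emi : mi μ V (fun ω => (X₁ ω, X₂ ω, Y₁ ω, Y₂ ω))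
      = ent μ V + ent μ (fun ω => (X₁ ω, X₂ ω, Y₁ ω, Y₂ ω))
        - ent μ (fun ω => (V ω, X₁ ω, X₂ ω, Y₁ ω, Y₂ ω)) := rfl
  have EmiA : mi μ V (fun ω => (X₁ ω, Y₁ ω))
      = ent μ V + ent μ (fun ω => (X₁ ω, Y₁ ω))
        - ent μ (fun ω => (V ω, X₁ ω, Y₁ ω)) := rfl
  have EmiB : mi μ (fun ω => (V ω, X₁ ω, Y₁ ω)) (fun ω => (X₂ ω, Y₂ ω))
      = ent μ (fun ω => (V ω, X₁ ω, Y₁ ω)) + ent μ (fun ω => (X₂ ω, Y₂ ω))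
        - ent μ (fun ω => ((V ω, X₁ ω, Y₁ ω), X₂ ω, Y₂ ω)) := rfl
  have Ehind : mi μ (fun ω => (X₁ ω, Y₁ ω)) (fun ω => (X₂ ω, Y₂ ω))
      = ent μ (fun ω => (X₁ ω, Y₁ ω)) + ent μ (fun ω => (X₂ ω, Y₂ ω))
        - ent μ (fun ω => ((X₁ ω, Y₁ ω), X₂ ω, Y₂ ω)) := rfl
  -- nonnegativity facts
  have n1 : 0 ≤ cmi μ X₁ Y₁ V := cmi_nonneg μ hX₁ hY₁ hV
  have n2 : 0 ≤ cmi μ X₁ Y₂ (fun ω => (Y₁ ω, V ω)) :=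
    cmi_nonneg μ hX₁ hY₂ (hY₁.prodMk hV)
  have n3 : 0 ≤ cmi μ X₂ (fun ω => (Y₁ ω, Y₂ ω)) (fun ω => (X₁ ω, V ω)) :=
    cmi_nonneg μ hX₂ (hY₁.prodMk hY₂) (hX₁.prodMk hV)
  have n4 : 0 ≤ cmi μ X₁ (fun ω => (Y₁ ω, Y₂ ω)) V :=
    cmi_nonneg μ hX₁ (hY₁.prodMk hY₂) hV
  have n5 : 0 ≤ cmi μ X₂ Y₁ (fun ω => (X₁ ω, V ω)) :=
    cmi_nonneg μ hX₂ hY₁ (hX₁.prodMk hV)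
  have n6 : 0 ≤ cmi μ X₂ Y₂ (fun ω => (V ω, X₁ ω, Y₁ ω)) :=
    cmi_nonneg μ hX₂ hY₂ (hV.prodMk (hX₁.prodMk hY₁))
  have hU₂m : DMeasurable (fun ω => (V ω, X₁ ω, Y₁ ω)) := hV.prodMk (hX₁.prodMk hY₁)
  have h1 : cmi μ X₁ Y₁ V = 0 := by
    linarith [Ehci, E1, E2, E3, ra, rb, rc, rd, re, rf, rg, rh, n1, n2, n3, hci]
  have h2 : cmi μ X₂ Y₂ (fun ω => (V ω, X₁ ω, Y₁ ω)) = 0 := by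
    linarith [Ehci, E4, E5, E6, ra, rb, rc, rf, ri, rj, rk, rl, rm, rn, ro,
      n4, n5, n6, hci]
  have h3 : mi μ V (fun ω => (X₁ ω, X₂ ω, Y₁ ω, Y₂ ω))
      ≥ mi μ V (fun ω => (X₁ ω, Y₁ ω))
        + mi μ (fun ω => (V ω, X₁ ω, Y₁ ω)) (fun ω => (X₂ ω, Y₂ ω)) := by
    linarith [Emi, EmiA, EmiB, Ehind, s1, s2, s3, s4, hind]
  exact ⟨𝒱, 𝒱 × 𝒳₁ × 𝒴₁, inferInstance, inferInstance, V, fun ω => (V ω, X₁ ω, Y₁ ω),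
    hV, hU₂m, h1, h2, h3⟩
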